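/- Let n' ≥ n with n' ≡ n (mod 2). If S^B_{Q,q}(n,d) is not a semisimple K-algebra, then S^B_{Q,q}(n',d) is not a semisimple K-algebra. -/

import Mathlib

set_option maxHeartbeats 1000000
set_option synthInstance.maxHeartbeats 1000000
open scoped TensorProduct
open scoped Classical

noncomputable section

/-- The index set `I(n)`: the integers in `[-⌊n/2⌋, ⌊n/2⌋]`, with `0` excluded when `n` is even. -/
def IFin (n : ℕ) : Finset ℤ :=
  (Finset.Icc (-((n / 2 : ℕ) : ℤ)) ((n / 2 : ℕ) : ℤ)).filter fun i => i ≠ 0 ∨ n % 2 = 1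

lemma neg_mem_IFin {n : ℕ} {i : ℤ} (h : i ∈ IFin n) : -i ∈ IFin n := by
  simp only [IFin, Finset.mem_filter, Finset.mem_Icc] at h ⊢
  rcases h with ⟨⟨h1, h2⟩, h3⟩
  refine ⟨⟨by omega, by omega⟩, ?_⟩
  rcases h3 with h3 | h3
  · exact Or.inl (by omega)
  · exact Or.inr h3

/-- Negation on the index set. -/
def negI (n : ℕ) (i : ↥(IFin n)) : ↥(IFin n) := ⟨-(i : ℤ), neg_mem_IFin i.2⟩

variable (K : Type) [Field K] (Q q : K) (n d : ℕ)

/-- The tensor space `V(n)^{⊗ d}`, realized as the free `K`-module on the set of `d`-tuples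
of elements of `I(n)`; the tuple `μ` corresponds to the basis vector `v_μ`. -/
def TSp : Type := (Fin d → ↥(IFin n)) →₀ K

instance : AddCommGroup (TSp K n d) :=
  inferInstanceAs (AddCommGroup ((Fin d → ↥(IFin n)) →₀ K))

instance : Module K (TSp K n d) :=
  inferInstanceAs (Module K ((Fin d → ↥(IFin n)) →₀ K))

/-- The basis vector `v_μ` of the tensor space. -/
def bs (μ : Fin d → ↥(IFin n)) : TSp K n d := Finsupp.single μ 1

/-- The value of the right action of the Hecke generator `T_t` (for `t = 0` this is `T_0`,
for `t ≥ 1` it is the type A generator acting on the tensor positions `t-1, t` (0-indexed)). -/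
def preT (t : Fin d) (μ : Fin d → ↥(IFin n)) : TSp K n d :=
  if (t : ℕ) = 0 then
    if 0 < ((μ t : ℤ)) then bs K n d (Function.update μ t (negI n (μ t)))
    else if ((μ t : ℤ)) = 0 then Q⁻¹ • bs K n d μ
    else bs K n d (Function.update μ t (negI n (μ t))) + (Q⁻¹ - Q) • bs K n d μ
  else
    let p : Fin d := ⟨(t : ℕ) - 1, Nat.lt_of_le_of_lt (Nat.sub_le _ _) t.isLt⟩
    if ((μ p : ℤ)) < ((μ t : ℤ)) then bs K n d (μ ∘ Equiv.swap p t)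
    else if ((μ p : ℤ)) = ((μ t : ℤ)) then q⁻¹ • bs K n d μ
    else bs K n d (μ ∘ Equiv.swap p t) + (q⁻¹ - q) • bs K n d μ

/-- The operator on the tensor space given by the right action of the Hecke generator `T_t`. -/
def Tact (t : Fin d) : Module.End K (TSp K n d) :=
  Finsupp.lift (TSp K n d) K (Fin d → ↥(IFin n)) (preT K Q q n d t)

/-- The right action operator of `T_t` for a natural number index, the identity out of range. -/
def Tact' (t : ℕ) : Module.End K (TSp K n d) :=
  if h : t < d then Tact K Q q n d ⟨t, h⟩ else 1

/-- The type B `q`-Schur algebra `S^B_{Q,q}(n,d) = End_{H^B_{Q,q}(d)}(V(n)^{⊗d})`, realized as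
the centralizer of the operators giving the right action of the generators `T_0, …, T_{d-1}`. -/
def SchurB : Subalgebra K (Module.End K (TSp K n d)) :=
  Subalgebra.centralizer K (Set.range (Tact K Q q n d))

/-- The type A `q`-Schur algebra `S^A_q(m,i) = End_{H_q(Σ_i)}(V(m)^{⊗i})`, realized as the
centralizer of the operators giving the right action of the generators `T_1, …, T_{i-1}`. -/
def SchurA (m i : ℕ) : Subalgebra K (Module.End K (TSp K m i)) :=
  Subalgebra.centralizer K {f | ∃ t : Fin i, (t : ℕ) ≠ 0 ∧ f = Tact K q q m i t}

/-- The polynomial `f^B_d(Q,q) = ∏_{i=1-d}^{d-1} (Q⁻² + q^{2i})`. -/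
def fB : K := ∏ i ∈ Finset.Icc (1 - (d : ℤ)) ((d : ℤ) - 1), (Q⁻¹ ^ 2 + q ^ (2 * i))


/-! Since `I(n) ⊆ I(n')`, extending tuples by inclusion and discarding the tuples that leave
`I(n)` make `V(n)^{⊗d}` a direct summand of `V(n')^{⊗d}`: both maps commute with every `T_t`.
Hence `S^B_{Q,q}(n,d)` is isomorphic to the corner `e S e` of `S = S^B_{Q,q}(n',d)` cut out by the
idempotent `e = incl ∘ restrict`, and a corner of a semisimple ring `A` is semisimple: a left ideal
`L` of `eAe` is generated by the idempotent `e f`, where `f` is an idempotent generator of `A L`. -/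

theorem isSemisimpleRing_of_forall_ideal_eq_span_idempotent {R : Type*} [Ring R]
    (h : ∀ L : Ideal R, ∃ g : R, IsIdempotentElem g ∧ L = Ideal.span {g}) :
    IsSemisimpleRing R := by
  refine (isSemisimpleModule_iff R R).mpr ⟨fun L => ?_⟩
  obtain ⟨g, hg, rfl⟩ := h L
  let φ : Module.End R R := LinearMap.toSpanSingleton R R g
  have hφ : IsIdempotentElem φ := LinearMap.ext fun x => by
    simp [φ, Module.End.mul_apply, mul_assoc, hg.eq]
  refine ⟨LinearMap.ker φ, ?_⟩
  simpa only [φ, LinearMap.range_toSpanSingleton] using LinearMap.IsIdempotentElem.isCompl hφ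

theorem IsIdempotentElem.corner_ideal_eq_span_idempotent {R : Type*} [Ring R] [IsSemisimpleRing R]
    {e : R} (idem : IsIdempotentElem e) (L : Ideal idem.Corner) :
    ∃ g : idem.Corner, IsIdempotentElem g ∧ L = Ideal.span {g} := by
  have hcorner (c : idem.Corner) : e * c.1 = c.1 ∧ c.1 * e = c.1 :=
    (Subsemigroup.mem_corner_iff idem).mp c.2
  set J : Ideal R := Ideal.span (Subtype.val '' (L : Set idem.Corner))
  -- quantified over `r` so that the `smul` case of the span induction goes through
  have heJ : ∀ x ∈ J, ∀ r : R, ∃ l ∈ L, l.1 = e * r * x := by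
    intro x hx
    induction hx using Submodule.span_induction with
    | mem x hx =>
      obtain ⟨l, hl, rfl⟩ := hx
      intro r
      refine ⟨(⟨e * r * e, r, rfl⟩ : idem.Corner) * l, L.smul_mem _ hl, ?_⟩
      change e * r * e * l.1 = _
      rw [mul_assoc _ e, (hcorner l).1]
    | zero => exact fun r => ⟨0, L.zero_mem, (mul_zero _).symm⟩
    | add x y _ _ hx hy =>
      intro r
      obtain ⟨a, ha, ha'⟩ := hx r
      obtain ⟨b, hb, hb'⟩ := hy r
      exact ⟨a + b, L.add_mem ha hb, by rw [mul_add, ← ha', ← hb']; rfl⟩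
    | smul s x _ hx =>
      intro r
      simpa only [smul_eq_mul, mul_assoc] using hx (r * s)
  obtain ⟨f, hf, hJf⟩ := IsSemisimpleRing.ideal_eq_span_idempotent J
  have hfJ : f ∈ J := hJf ▸ Ideal.subset_span rfl
  obtain ⟨g, hgL, hg⟩ : ∃ g ∈ L, g.1 = e * f := by simpa using heJ f hfJ 1
  have hLg : ∀ l ∈ L, l * g = l := by
    intro l hl
    have hlJ : l.1 ∈ J := Ideal.subset_span ⟨l, hl, rfl⟩
    obtain ⟨s, hs⟩ := Ideal.mem_span_singleton'.mp (hJf ▸ hlJ)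
    apply Subtype.ext
    change l.1 * g.1 = l.1
    rw [hg, ← mul_assoc, (hcorner l).2, ← hs, mul_assoc, hf.eq]
  refine ⟨g, hLg g hgL, le_antisymm (fun l hl => ?_) ((Ideal.span_singleton_le_iff_mem L).mpr hgL)⟩
  exact Ideal.mem_span_singleton'.mpr ⟨l, hLg l hl⟩

theorem IsIdempotentElem.isSemisimpleRing_corner {R : Type*} [Ring R] [IsSemisimpleRing R]
    {e : R} (idem : IsIdempotentElem e) : IsSemisimpleRing idem.Corner :=
  isSemisimpleRing_of_forall_ideal_eq_span_idempotent idem.corner_ideal_eq_span_idempotent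

namespace Subalgebra

variable {R M N ι : Type*} [CommSemiring R] [AddCommMonoid M] [Module R M]
  [AddCommMonoid N] [Module R N] {T : ι → Module.End R N} {T' : ι → Module.End R M}

theorem comp_comp_mem_centralizer_range {a : N →ₗ[R] M} {b : M →ₗ[R] N}
    (ha : ∀ t, T' t ∘ₗ a = a ∘ₗ T t) (hb : ∀ t, T t ∘ₗ b = b ∘ₗ T' t) {f : Module.End R N}
    (hf : f ∈ centralizer R (Set.range T)) : a ∘ₗ f ∘ₗ b ∈ centralizer R (Set.range T') := by
  rw [mem_centralizer_iff, Set.forall_mem_range] at hf ⊢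
  intro t
  simp only [Module.End.mul_eq_comp] at hf ⊢
  rw [← LinearMap.comp_assoc, ha]
  simp only [LinearMap.comp_assoc, ← hb]
  congr 1
  rw [← LinearMap.comp_assoc, hf, LinearMap.comp_assoc]

variable {i : N →ₗ[R] M} {p : M →ₗ[R] N} (hpi : Function.LeftInverse p i)
  (hi : ∀ t, T' t ∘ₗ i = i ∘ₗ T t) (hp : ∀ t, T t ∘ₗ p = p ∘ₗ T' t)
include hpi

theorem isIdempotentElem_comp_of_leftInverse :
    IsIdempotentElem (⟨i ∘ₗ p, comp_comp_mem_centralizer_range hi hp (one_mem _)⟩ :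
      centralizer R (Set.range T')) :=
  Subtype.ext <| LinearMap.ext fun v => congrArg i (hpi (p v))

def centralizerRangeEquivCorner :
    centralizer R (Set.range T) ≃+*
      (isIdempotentElem_comp_of_leftInverse hpi hi hp).Corner where
  toFun f := ⟨⟨i ∘ₗ f.1 ∘ₗ p, comp_comp_mem_centralizer_range hi hp f.2⟩,
    ⟨⟨i ∘ₗ f.1 ∘ₗ p, comp_comp_mem_centralizer_range hi hp f.2⟩,
      Subtype.ext <| LinearMap.ext fun v => by simp [Module.End.mul_apply, hpi _]⟩⟩
  invFun x := ⟨p ∘ₗ x.1.1 ∘ₗ i, comp_comp_mem_centralizer_range hp hi x.1.2⟩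
  left_inv f := Subtype.ext <| LinearMap.ext fun v => by simp [hpi _]
  right_inv x := by
    obtain ⟨hex, hxe⟩ := (Subsemigroup.mem_corner_iff
      (isIdempotentElem_comp_of_leftInverse hpi hi hp)).mp x.2
    refine Subtype.ext (Subtype.ext (LinearMap.ext fun v => ?_))
    conv_rhs => rw [← hxe, ← hex]
    rfl
  map_mul' f g := Subtype.ext <| Subtype.ext <| LinearMap.ext fun v =>
    show i (f.1 (g.1 (p v))) = i (f.1 (p (i (g.1 (p v))))) by rw [hpi]
  map_add' f g := Subtype.ext <| Subtype.ext <| LinearMap.ext fun v =>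
    show i ((f.1 + g.1) (p v)) = i (f.1 (p v)) + i (g.1 (p v)) by simp

end Subalgebra

theorem Finsupp.lift_single_one {R M α : Type*} [Semiring R] [AddCommMonoid M] [Module R M]
    (f : α → M) (a : α) : Finsupp.lift M R α f (Finsupp.single a 1) = f a := by
  simp

theorem IFin_subset_of_le {n n' : ℕ} (hle : n ≤ n') (hpar : n' % 2 = n % 2) :
    IFin n ⊆ IFin n' := by
  intro i hi
  simp only [IFin, Finset.mem_filter, Finset.mem_Icc] at hi ⊢
  have hhalf : n / 2 ≤ n' / 2 := Nat.div_le_div_right hle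
  omega

section TensorRetract

variable {n d} {n' : ℕ}

theorem TSp.linearMap_ext {M : Type*} [AddCommGroup M] [Module K M] {f g : TSp K n d →ₗ[K] M}
    (h : ∀ μ, f (bs K n d μ) = g (bs K n d μ)) : f = g :=
  Finsupp.lhom_ext' fun μ => LinearMap.ext_ring (h μ)

theorem Tact_bs (t : Fin d) (μ : Fin d → IFin n) :
    Tact K Q q n d t (bs K n d μ) = preT K Q q n d t μ :=
  Finsupp.lift_single_one _ _

variable (n d n') in
def TSp.restrict : TSp K n' d →ₗ[K] TSp K n d :=
  Finsupp.lift (TSp K n d) K (Fin d → IFin n')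
    fun ν => if hν : ∀ s, (ν s : ℤ) ∈ IFin n then bs K n d (fun s => ⟨ν s, hν s⟩) else 0

theorem TSp.restrict_bs (ν : Fin d → IFin n') :
    TSp.restrict K n d n' (bs K n' d ν) =
      if hν : ∀ s, (ν s : ℤ) ∈ IFin n then bs K n d (fun s => ⟨ν s, hν s⟩) else 0 :=
  Finsupp.lift_single_one _ _

theorem TSp.restrict_preT_of_not_forall_mem (t : Fin d) {ν : Fin d → IFin n'}
    (hν : ¬ ∀ s, (ν s : ℤ) ∈ IFin n) : TSp.restrict K n d n' (preT K Q q n' d t ν) = 0 := by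
  have h0 {ρ : Fin d → IFin n'} (hρ : (∀ s, (ρ s : ℤ) ∈ IFin n) → ∀ s, (ν s : ℤ) ∈ IFin n) :
      TSp.restrict K n d n' (bs K n' d ρ) = 0 := by
    rw [TSp.restrict_bs, dif_neg (fun h => hν (hρ h))]
  have hupdate : (∀ s, (Function.update ν t (negI n' (ν t)) s : ℤ) ∈ IFin n) →
      ∀ s, (ν s : ℤ) ∈ IFin n := by
    intro h s
    rcases eq_or_ne s t with rfl | hst
    · simpa [negI] using neg_mem_IFin (h s)
    · simpa [Function.update_of_ne hst] using h s
  have hperm (σ : Equiv.Perm (Fin d)) :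
      (∀ s, ((ν ∘ σ) s : ℤ) ∈ IFin n) → ∀ s, (ν s : ℤ) ∈ IFin n :=
    fun h s => by simpa using h (σ.symm s)
  simp only [preT]
  split_ifs <;> simp only [map_add, map_smul, h0 hupdate, h0 (hperm _), h0 id, smul_zero, add_zero]

variable (h : IFin n ⊆ IFin n')

def inclTuple (μ : Fin d → IFin n) : Fin d → IFin n' := fun s => ⟨μ s, h (μ s).2⟩

variable (d) in
def TSp.incl : TSp K n d →ₗ[K] TSp K n' d :=
  Finsupp.lift (TSp K n' d) K (Fin d → IFin n) fun μ => bs K n' d (inclTuple h μ)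

theorem TSp.incl_bs (μ : Fin d → IFin n) :
    TSp.incl K d h (bs K n d μ) = bs K n' d (inclTuple h μ) :=
  Finsupp.lift_single_one _ _

variable (d) in
theorem TSp.leftInverse_restrict_incl :
    Function.LeftInverse (TSp.restrict K n d n') (TSp.incl K d h) := by
  suffices TSp.restrict K n d n' ∘ₗ TSp.incl K d h = LinearMap.id from LinearMap.congr_fun this
  refine TSp.linearMap_ext K fun μ => ?_
  simp [TSp.incl_bs, TSp.restrict_bs, inclTuple]

theorem update_inclTuple_negI (μ : Fin d → IFin n) (t : Fin d) :
    Function.update (inclTuple h μ) t (negI n' (inclTuple h μ t)) =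
      inclTuple h (Function.update μ t (negI n (μ t))) := by
  funext s
  rcases eq_or_ne s t with rfl | hst
  · simp [inclTuple, negI]
  · simp [Function.update_of_ne hst, inclTuple]

theorem preT_inclTuple (t : Fin d) (μ : Fin d → IFin n) :
    preT K Q q n' d t (inclTuple h μ) = TSp.incl K d h (preT K Q q n d t μ) := by
  have hcomp (σ : Equiv.Perm (Fin d)) : inclTuple h μ ∘ σ = inclTuple h (μ ∘ σ) := rfl
  have hval (s : Fin d) : (inclTuple h μ s : ℤ) = μ s := rfl
  simp only [preT, hval]
  split_ifs <;> simp only [map_add, map_smul, TSp.incl_bs, update_inclTuple_negI, hcomp]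

variable (d) in
theorem Tact_comp_incl (t : Fin d) :
    Tact K Q q n' d t ∘ₗ TSp.incl K d h = TSp.incl K d h ∘ₗ Tact K Q q n d t :=
  TSp.linearMap_ext K fun μ => by
    simp only [LinearMap.comp_apply, TSp.incl_bs, Tact_bs, preT_inclTuple]

variable (d) in
include h in
theorem Tact_comp_restrict (t : Fin d) :
    Tact K Q q n d t ∘ₗ TSp.restrict K n d n' = TSp.restrict K n d n' ∘ₗ Tact K Q q n' d t :=
  TSp.linearMap_ext K fun ν => by
    simp only [LinearMap.comp_apply, Tact_bs]
    by_cases hν : ∀ s, (ν s : ℤ) ∈ IFin n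
    · obtain ⟨μ, rfl⟩ : ∃ μ, inclTuple h μ = ν := ⟨fun s => ⟨ν s, hν s⟩, rfl⟩
      rw [preT_inclTuple, TSp.leftInverse_restrict_incl, ← TSp.incl_bs,
        TSp.leftInverse_restrict_incl, Tact_bs]
    · rw [TSp.restrict_bs, dif_neg hν, map_zero, TSp.restrict_preT_of_not_forall_mem K Q q t hν]

end TensorRetract

theorem schurB_not_semisimple_of_le
    (n' : ℕ) (hle : n ≤ n') (hpar : n' % 2 = n % 2)
    (hss : ¬ IsSemisimpleRing ↥(SchurB K Q q n d)) :
    ¬ IsSemisimpleRing ↥(SchurB K Q q n' d) := by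
  intro hss'
  have h := IFin_subset_of_le hle hpar
  have hpi := TSp.leftInverse_restrict_incl K d h
  have hi := Tact_comp_incl K Q q d h
  have hp := Tact_comp_restrict K Q q d h
  have idem := Subalgebra.isIdempotentElem_comp_of_leftInverse hpi hi hp
  rw [SchurB] at hss hss'
  have := idem.isSemisimpleRing_corner
  exact hss (RingEquiv.isSemisimpleRing (R := idem.Corner)
    (Subalgebra.centralizerRangeEquivCorner hpi hi hp).symm)

end
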